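/- Let U_m be the m×m matrix with all diagonal entries equal to 1, entries −1/2 immediately above and below the diagonal, and 0 elsewhere. If W is a real symmetric n×n matrix with x W xᵀ ≥ 1 for every nonzero x ∈ ℤⁿ, then the Kronecker product U_m ⊗ W satisfies y (U_m ⊗ W) yᵀ ≥ 1 for every nonzero y ∈ ℤ^{mn}. -/

import Mathlib

open Matrix Kronecker

/-- The tridiagonal matrix `U_m = (1/2)·tridiag(−1, 2, −1)`. -/
noncomputable def Umat (m : ℕ) : Matrix (Fin m) (Fin m) ℝ :=
  Matrix.of fun i j =>
    if (i : ℕ) = (j : ℕ) then 1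
    else if (i : ℕ) + 1 = (j : ℕ) ∨ (j : ℕ) + 1 = (i : ℕ) then -(1 / 2)
    else 0

/-!
Let `D = diffMat ℝ m`, the `(m+1) × m` matrix with
`D *ᵥ x = (x₀, x₁ - x₀, …, x_{m-1} - x_{m-2}, -x_{m-1})`. Then `U_m = ½ Dᵀ D`, so
`U_m ⊗ W = ½ (D ⊗ 1)ᵀ (1 ⊗ W) (D ⊗ 1)`, and the form of `U_m ⊗ W` at an integer `y`, read as an
`m × n` matrix, is half the sum of the forms of `W` at the `m + 1` integer rows of `D y`.
These rows sum to zero, and they are not all zero when `y ≠ 0` because partial sums recover `y`.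
Hence at least two of them are nonzero, each contributing at least `1`.
-/

section Kronecker

variable {R ι κ n : Type*} [CommSemiring R] [Fintype ι] [Fintype n]

theorem dotProduct_transpose_mul_mul_mulVec [Fintype κ] (M : Matrix κ ι R) (N : Matrix κ κ R)
    (v : ι → R) : v ⬝ᵥ (Mᵀ * N * M) *ᵥ v = (M *ᵥ v) ⬝ᵥ N *ᵥ (M *ᵥ v) := by
  rw [← mulVec_mulVec, ← mulVec_mulVec, dotProduct_mulVec, vecMul_transpose]

theorem dotProduct_one_kronecker_mulVec [Fintype κ] [DecidableEq κ] (W : Matrix n n R)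
    (v : κ × n → R) :
    v ⬝ᵥ ((1 : Matrix κ κ R) ⊗ₖ W) *ᵥ v = ∑ k, (fun a => v (k, a)) ⬝ᵥ W *ᵥ fun a => v (k, a) := by
  simp [dotProduct, mulVec, kroneckerMap_apply, one_apply, Fintype.sum_prod_type, ite_mul,
    Finset.mul_sum]

theorem kronecker_one_mulVec_apply [DecidableEq n] (D : Matrix κ ι R) (v : ι × n → R) (k : κ)
    (a : n) : ((D ⊗ₖ (1 : Matrix n n R)) *ᵥ v) (k, a) = (D *ᵥ fun j => v (j, a)) k := by
  simp [dotProduct, mulVec, kroneckerMap_apply, one_apply, Fintype.sum_prod_type]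

theorem dotProduct_transpose_mul_self_kronecker_mulVec [Fintype κ] [DecidableEq κ] [DecidableEq n]
    (D : Matrix κ ι R) (W : Matrix n n R) (v : ι × n → R) :
    v ⬝ᵥ ((Dᵀ * D) ⊗ₖ W) *ᵥ v =
      ∑ k, (fun a => (D *ᵥ fun j => v (j, a)) k) ⬝ᵥ W *ᵥ fun a => (D *ᵥ fun j => v (j, a)) k := by
  have hfactor : (Dᵀ * D) ⊗ₖ W =
      (D ⊗ₖ (1 : Matrix n n R))ᵀ * ((1 : Matrix κ κ R) ⊗ₖ W) * (D ⊗ₖ (1 : Matrix n n R)) := by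
    rw [← kroneckerMap_transpose, transpose_one, ← mul_kronecker_mul, ← mul_kronecker_mul,
      Matrix.mul_one, Matrix.one_mul, Matrix.mul_one]
  rw [hfactor, dotProduct_transpose_mul_mul_mulVec, dotProduct_one_kronecker_mulVec]
  simp only [kronecker_one_mulVec_apply]

end Kronecker

def diffMat (R : Type*) [Ring R] (m : ℕ) : Matrix (Fin (m + 1)) (Fin m) R :=
  Matrix.of fun i j => (if i = j.castSucc then 1 else 0) - if i = j.succ then 1 else 0

section diffMat

variable {R : Type*} [Ring R] {m : ℕ}

theorem sum_diffMat_apply (j : Fin m) : ∑ i, diffMat R m i j = 0 := by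
  simp [diffMat, Finset.sum_sub_distrib]

theorem sum_Iic_diffMat_apply (j l : Fin m) :
    ∑ i ∈ Finset.Iic j.castSucc, diffMat R m i l = if l = j then 1 else 0 := by
  simp only [diffMat, of_apply, Finset.sum_sub_distrib, Finset.sum_ite_eq', Finset.mem_Iic,
    Fin.castSucc_le_castSucc_iff, Fin.succ_le_castSucc_iff]
  rcases lt_trichotomy l j with h | rfl | h
  · simp [h, h.le, h.ne]
  · simp
  · simp [h.not_gt, h.not_ge, h.ne']

theorem sum_diffMat_mulVec (x : Fin m → R) : ∑ i, (diffMat R m *ᵥ x) i = 0 := by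
  simp only [mulVec, dotProduct, Finset.sum_comm (γ := Fin (m + 1)), ← Finset.sum_mul,
    sum_diffMat_apply, zero_mul, Finset.sum_const_zero]

theorem sum_Iic_diffMat_mulVec (x : Fin m → R) (j : Fin m) :
    ∑ i ∈ Finset.Iic j.castSucc, (diffMat R m *ᵥ x) i = x j := by
  simp only [mulVec, dotProduct, Finset.sum_comm (γ := Fin (m + 1)), ← Finset.sum_mul,
    sum_Iic_diffMat_apply, ite_mul, one_mul, zero_mul, Finset.sum_ite_eq', Finset.mem_univ, if_true]

theorem diffMat_map_intCast : (diffMat ℤ m).map (Int.cast : ℤ → R) = diffMat R m := by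
  ext i j
  simp [diffMat]

theorem diffMat_mulVec_intCast (x : Fin m → ℤ) :
    diffMat R m *ᵥ (fun j => (x j : R)) = fun i => ((diffMat ℤ m *ᵥ x) i : R) := by
  funext i
  rw [← diffMat_map_intCast]
  exact (RingHom.map_mulVec (Int.castRingHom R) _ _ i).symm

end diffMat

theorem Umat_eq_half_smul_transpose_diffMat_mul_diffMat (m : ℕ) :
    Umat m = (1 / 2 : ℝ) • ((diffMat ℝ m)ᵀ * diffMat ℝ m) := by
  ext j k
  simp only [Umat, diffMat, mul_apply, transpose_apply, of_apply, Matrix.smul_apply, sub_mul,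
    mul_sub, ite_mul, one_mul, zero_mul, Finset.sum_sub_distrib, Finset.sum_ite_eq',
    Finset.mem_univ, if_true, smul_eq_mul]
  simp only [Fin.ext_iff, Fin.val_castSucc, Fin.val_succ]
  split_ifs <;> first | omega | norm_num

theorem Fintype.exists_ne_and_ne_zero_of_sum_eq_zero {ι M : Type*} [Fintype ι] [AddCommMonoid M]
    {f : ι → M} (hsum : ∑ j, f j = 0) {i : ι} (hi : f i ≠ 0) : ∃ j ≠ i, f j ≠ 0 := by
  by_contra! h
  exact hi (Fintype.sum_eq_single i h ▸ hsum)

theorem kronecker_Umat_integral_posDef_general (m n : ℕ)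
    (W : Matrix (Fin n) (Fin n) ℝ)
    (hint : ∀ x : Fin n → ℤ, x ≠ 0 →
      1 ≤ (fun i => (x i : ℝ)) ⬝ᵥ W.mulVec (fun i => (x i : ℝ))) :
    ∀ y : Fin m × Fin n → ℤ, y ≠ 0 →
      1 ≤ (fun i => (y i : ℝ)) ⬝ᵥ (Umat m ⊗ₖ W).mulVec (fun i => (y i : ℝ)) := by
  intro y hy
  set q : (Fin n → ℤ) → ℝ := fun x => (fun i => (x i : ℝ)) ⬝ᵥ W *ᵥ fun i => (x i : ℝ)
  have hq_nonneg : ∀ x, 0 ≤ q x := fun x => by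
    rcases eq_or_ne x 0 with rfl | hx
    · simp [q]
    · exact zero_le_one.trans (hint x hx)
  set u : Fin (m + 1) → Fin n → ℤ := fun i a => (diffMat ℤ m *ᵥ fun j => y (j, a)) i
  have hform : (fun i => (y i : ℝ)) ⬝ᵥ (Umat m ⊗ₖ W) *ᵥ (fun i => (y i : ℝ)) =
      1 / 2 * ∑ i, q (u i) := by
    rw [Umat_eq_half_smul_transpose_diffMat_mul_diffMat, smul_kronecker, smul_mulVec,
      dotProduct_smul, dotProduct_transpose_mul_self_kronecker_mulVec]
    simp only [diffMat_mulVec_intCast, smul_eq_mul, q, u]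
  have hsum : ∑ i, u i = 0 := funext fun a => by simp [u, sum_diffMat_mulVec]
  obtain ⟨⟨j, a⟩, hja⟩ := Function.ne_iff.mp hy
  obtain ⟨i, hi⟩ : ∃ i, u i ≠ 0 := by
    by_contra! h
    exact hja ((sum_Iic_diffMat_mulVec (fun j => y (j, a)) j).symm.trans
      (Finset.sum_eq_zero fun i _ => congrFun (h i) a))
  obtain ⟨i', hi'i, hi'⟩ := Fintype.exists_ne_and_ne_zero_of_sum_eq_zero hsum hi
  have htwo : q (u i) + q (u i') ≤ ∑ k, q (u k) :=
    Finset.add_le_sum (fun k _ => hq_nonneg (u k)) (Finset.mem_univ i) (Finset.mem_univ i')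
      hi'i.symm
  linarith [hint _ hi, hint _ hi']

/-- If `W` is symmetric and integral positive definite, then so is `U_m ⊗ W`. -/
theorem kronecker_Umat_integral_posDef (m n : ℕ)
    (W : Matrix (Fin n) (Fin n) ℝ) (hsymm : W.IsSymm)
    (hint : ∀ x : Fin n → ℤ, x ≠ 0 →
      1 ≤ (fun i => (x i : ℝ)) ⬝ᵥ W.mulVec (fun i => (x i : ℝ))) :
    ∀ y : Fin m × Fin n → ℤ, y ≠ 0 →
      1 ≤ (fun i => (y i : ℝ)) ⬝ᵥ (Umat m ⊗ₖ W).mulVec (fun i => (y i : ℝ)) :=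
  kronecker_Umat_integral_posDef_general m n W hint
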